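/- For every n ∈ ℕ there is a linear isomorphic embedding T of the Lipschitz-free space F([0,1]ⁿ) into (C¹([0,1]ⁿ))*, defined on Dirac elements by T(δ_x)(f) = f(x); specifically, for μ = Σ α_i δ_{x_i}, one has (1/√n)·sup{|μ(f)| : ‖f‖¹_∞ ≤ 1, f(0)=0} ≤ ‖μ‖_{F([0,1]ⁿ)} ≤ √n·sup{|μ(f)| : ‖f‖¹_∞ ≤ 1, f(0)=0}. -/

import Mathlib

/-!
Lower bound: the partial derivatives of a function in the unit ball of `C¹([0,1]ⁿ)` are bounded
by `1`, so its gradient has Euclidean norm at most `√n`, and by the mean value theorem on the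
convex cube its restriction is a `√n`-Lipschitz function vanishing at `0`.

Upper bound: a `K`-Lipschitz function on the cube vanishing at `0` extends (McShane) to a
`K`-Lipschitz function on `ℝⁿ`; mollifying and recentring gives a smooth `K`-Lipschitz function
vanishing at `0` and `ε`-close to it. On the cube this function is bounded by `K √n + ε` and its
partial derivatives by `K ≤ K √n`, so dividing by `K √n + ε` lands in the `C¹` unit ball;
letting `ε → 0` gives the factor `√n K`.
-/

open Metric Set
open scoped NNReal ENNReal

/-- The space of real-valued Lipschitz functions on `M` vanishing at the base point `z`. -/
structure Lip0 {M : Type*} [MetricSpace M] (z : M) where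
  toFun : M → ℝ
  lipschitz' : ∃ K : ℝ≥0, LipschitzWith K toFun
  map_base' : toFun z = 0

namespace Lip0

variable {M : Type*} [MetricSpace M] {z : M}

instance : FunLike (Lip0 z) M ℝ where
  coe := Lip0.toFun
  coe_injective := by rintro ⟨f, _, _⟩ ⟨g, _, _⟩ h; simpa using h

@[simp] lemma coe_mk (f : M → ℝ) (h1 h2) : ⇑(⟨f, h1, h2⟩ : Lip0 z) = f := rfl

lemma map_base (f : Lip0 z) : f z = 0 := f.map_base'

instance : Zero (Lip0 z) := ⟨⟨0, ⟨0, LipschitzWith.const (0 : ℝ)⟩, rfl⟩⟩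

instance : Add (Lip0 z) :=
  ⟨fun f g => ⟨⇑f + ⇑g,
    ⟨f.lipschitz'.choose + g.lipschitz'.choose,
      f.lipschitz'.choose_spec.add g.lipschitz'.choose_spec⟩,
    by simp [map_base f, map_base g]⟩⟩

instance : Neg (Lip0 z) :=
  ⟨fun f => ⟨-⇑f, ⟨f.lipschitz'.choose, f.lipschitz'.choose_spec.neg⟩,
    by simp [map_base f]⟩⟩

lemma lip_const_smul {f : M → ℝ} {K : ℝ≥0} (h : LipschitzWith K f) (c : ℝ) :
    LipschitzWith (‖c‖₊ * K) (c • f) := by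
  rw [lipschitzWith_iff_dist_le_mul] at h ⊢
  intro x y
  calc dist ((c • f) x) ((c • f) y) = ‖c‖ * dist (f x) (f y) := by
        rw [Pi.smul_apply, Pi.smul_apply, dist_smul₀]
    _ ≤ ‖c‖ * (K * dist x y) := by
        apply mul_le_mul_of_nonneg_left (h x y) (norm_nonneg c)
    _ = (‖c‖₊ * K : ℝ≥0) * dist x y := by push_cast; ring

instance : SMul ℝ (Lip0 z) :=
  ⟨fun c f => ⟨c • ⇑f,
    ⟨‖c‖₊ * f.lipschitz'.choose, lip_const_smul f.lipschitz'.choose_spec c⟩,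
    by simp [map_base f]⟩⟩

instance : Sub (Lip0 z) := ⟨fun f g => f + -g⟩
instance : SMul ℕ (Lip0 z) := ⟨fun n f => (n : ℝ) • f⟩
instance : SMul ℤ (Lip0 z) := ⟨fun n f => (n : ℝ) • f⟩

@[simp] lemma coe_zero : ⇑(0 : Lip0 z) = 0 := rfl
@[simp] lemma coe_add (f g : Lip0 z) : ⇑(f + g) = ⇑f + ⇑g := rfl
@[simp] lemma coe_neg (f : Lip0 z) : ⇑(-f) = -⇑f := rfl
@[simp] lemma coe_smul (c : ℝ) (f : Lip0 z) : ⇑(c • f) = c • ⇑f := rfl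
@[simp] lemma coe_sub (f g : Lip0 z) : ⇑(f - g) = ⇑f - ⇑g := by
  show ⇑(f + -g) = _; ext x; simp [sub_eq_add_neg]

instance : AddCommGroup (Lip0 z) :=
  DFunLike.coe_injective.addCommGroup _ coe_zero coe_add coe_neg coe_sub
    (fun f n => by show ⇑((n : ℝ) • f) = _; ext x; simp)
    (fun f n => by show ⇑((n : ℝ) • f) = _; ext x; simp)

instance : Module ℝ (Lip0 z) := by
  refine Function.Injective.module ℝ (AddMonoidHom.mk' (fun (f : Lip0 z) => ⇑f) coe_add) ?_ ?_
  · exact DFunLike.coe_injective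
  · exact coe_smul

/-- The least Lipschitz constant. -/
noncomputable def lipConst (f : M → ℝ) : ℝ≥0 := sInf {K : ℝ≥0 | LipschitzWith K f}

lemma lipschitzWith_lipConst {f : M → ℝ} (h : ∃ K : ℝ≥0, LipschitzWith K f) :
    LipschitzWith (lipConst f) f := by
  rw [lipschitzWith_iff_dist_le_mul]
  intro x y
  rcases eq_or_ne x y with rfl | hxy
  · simp
  have hd : 0 < dist x y := dist_pos.2 hxy
  have h1 : Real.toNNReal (dist (f x) (f y) / dist x y) ≤ lipConst f := by
    apply le_csInf h
    intro K hK
    rw [← NNReal.coe_le_coe, Real.coe_toNNReal _ (by positivity)]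
    have hK' := lipschitzWith_iff_dist_le_mul.1 hK
    exact (div_le_iff₀ hd).2 (by simpa [mul_comm] using hK' x y)
  rw [← NNReal.coe_le_coe, Real.coe_toNNReal _ (by positivity)] at h1
  calc dist (f x) (f y) = dist (f x) (f y) / dist x y * dist x y := by field_simp
    _ ≤ (lipConst f : ℝ) * dist x y := by
        apply mul_le_mul_of_nonneg_right _ hd.le
        exact h1



lemma lipConst_le {f : M → ℝ} {K : ℝ≥0} (h : LipschitzWith K f) : lipConst f ≤ K :=
  csInf_le (OrderBot.bddBelow _) h

lemma dist_le_lipConst (f : Lip0 z) (x y : M) :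
    dist (f x) (f y) ≤ (lipConst ⇑f : ℝ) * dist x y :=
  lipschitzWith_iff_dist_le_mul.1 (lipschitzWith_lipConst f.lipschitz') x y

noncomputable instance : Norm (Lip0 z) := ⟨fun f => (lipConst ⇑f : ℝ)⟩

lemma norm_def (f : Lip0 z) : ‖f‖ = (lipConst ⇑f : ℝ) := rfl

lemma eq_zero_of_lipConst_eq_zero (f : Lip0 z) (h : lipConst ⇑f = 0) : f = 0 := by
  apply DFunLike.coe_injective
  ext x
  have h2 := dist_le_lipConst f x z
  rw [h, map_base f] at h2
  simp only [NNReal.coe_zero, zero_mul] at h2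
  have := dist_nonneg (x := f x) (y := (0:ℝ))
  simp only [coe_zero, Pi.zero_apply]
  have : dist (f x) (0:ℝ) = 0 := le_antisymm h2 dist_nonneg
  simpa [dist_eq_norm] using this

lemma lipConst_smul (c : ℝ) (f : Lip0 z) : lipConst ⇑(c • f) = ‖c‖₊ * lipConst ⇑f := by
  have le1 : ∀ (c : ℝ) (f : Lip0 z), lipConst ⇑(c • f) ≤ ‖c‖₊ * lipConst ⇑f := by
    intro c f
    exact lipConst_le (lip_const_smul (lipschitzWith_lipConst f.lipschitz') c)
  rcases eq_or_ne c 0 with rfl | hc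
  · simp only [nnnorm_zero, zero_mul]
    refine le_antisymm ?_ zero_le
    have : (0:ℝ) • f = (0 : Lip0 z) := zero_smul ℝ f
    calc lipConst ⇑((0:ℝ) • f) ≤ ‖(0:ℝ)‖₊ * lipConst ⇑f := le1 0 f
      _ = 0 := by simp
  · refine le_antisymm (le1 c f) ?_
    have h2 := le1 c⁻¹ (c • f)
    rw [inv_smul_smul₀ hc] at h2
    have hcpos : (0:ℝ≥0) < ‖c‖₊ := by simpa using hc
    calc ‖c‖₊ * lipConst ⇑f ≤ ‖c‖₊ * (‖c⁻¹‖₊ * lipConst ⇑(c • f)) := by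
          exact mul_le_mul_of_nonneg_left h2 zero_le
      _ = lipConst ⇑(c • f) := by
          rw [← mul_assoc]
          have : ‖c‖₊ * ‖c⁻¹‖₊ = 1 := by
            rw [← nnnorm_mul, mul_inv_cancel₀ hc, nnnorm_one]
          rw [this, one_mul]

noncomputable def addGroupNorm (z : M) : AddGroupNorm (Lip0 z) where
  toFun f := (lipConst ⇑f : ℝ)
  map_zero' := by
    simp only [coe_zero]
    norm_cast
    exact le_antisymm (lipConst_le (LipschitzWith.const' (0:ℝ))) zero_le
  add_le' f g := by
    push_cast
    have : lipConst ⇑(f + g) ≤ lipConst ⇑f + lipConst ⇑g := by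
      refine lipConst_le ?_
      exact (lipschitzWith_lipConst f.lipschitz').add (lipschitzWith_lipConst g.lipschitz')
    exact_mod_cast this
  neg' f := by
    have h : (-⇑f : M → ℝ) = ⇑((-1 : ℝ) • f) := by ext x; simp
    show (lipConst ⇑(-f) : ℝ) = (lipConst ⇑f : ℝ)
    rw [coe_neg, h, lipConst_smul]
    simp
  eq_zero_of_map_eq_zero' f h := by
    apply eq_zero_of_lipConst_eq_zero
    have h' : (lipConst ⇑f : ℝ) = 0 := h
    exact_mod_cast h'

noncomputable instance : NormedAddCommGroup (Lip0 z) :=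
  (addGroupNorm z).toNormedAddCommGroup

noncomputable instance : NormedSpace ℝ (Lip0 z) where
  norm_smul_le c f := by
    show (lipConst ⇑(c • f) : ℝ) ≤ ‖c‖ * (lipConst ⇑f : ℝ)
    rw [lipConst_smul]
    push_cast
    simp [Real.norm_eq_abs]

end Lip0

section FreeSpace

variable {M : Type*} [MetricSpace M]

/-- The evaluation functional `δ_x ∈ Lip_0(M)^*`. -/
noncomputable def dirac (z x : M) : StrongDual ℝ (Lip0 z) :=
  LinearMap.mkContinuous
    { toFun := fun f => f x
      map_add' := by intro f g; simp
      map_smul' := by intro c f; simp }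
    (dist x z)
    (by
      intro f
      have := Lip0.dist_le_lipConst f x z
      rw [Lip0.map_base f, dist_zero_right] at this
      change _ ≤ dist x z * (Lip0.lipConst ⇑f : ℝ)
      simpa [mul_comm] using this)

@[simp] lemma dirac_apply (z x : M) (f : Lip0 z) : dirac z x f = f x := rfl

/-- The Lipschitz-free space over `M` with base point `z`: the closed linear span of
the evaluation functionals inside `Lip_0(M)^*`. -/
noncomputable def FreeSpace (z : M) : Submodule ℝ (StrongDual ℝ (Lip0 z)) :=
  (Submodule.span ℝ (Set.range (dirac z))).topologicalClosure

/-- The canonical embedding `δ : M → F(M)`. -/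
noncomputable def diracF (z x : M) : FreeSpace z :=
  ⟨dirac z x, Submodule.le_topologicalClosure _ (Submodule.subset_span ⟨x, rfl⟩)⟩

end FreeSpace

open Filter Topology in
lemma le_of_forall_pos_le_add_mul {a b D : ℝ} (h : ∀ η > 0, a ≤ b + η * D) : a ≤ b := by
  have hcont : Continuous fun η : ℝ => b + η * D := by fun_prop
  have hlim : Tendsto (fun η => b + η * D) (𝓝[>] 0) (𝓝 b) := by
    simpa using (hcont.tendsto 0).mono_left nhdsWithin_le_nhds
  exact ge_of_tendsto hlim (eventually_nhdsWithin_of_forall h)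

lemma abs_sum_mul_le_of_abs_sub_le {ι : Type*} [Fintype ι] (α u v : ι → ℝ) {η : ℝ}
    (h : ∀ i, |u i - v i| ≤ η) : |∑ i, α i * v i| ≤ |∑ i, α i * u i| + η * ∑ i, |α i| := by
  have hsplit : ∑ i, α i * v i = ∑ i, α i * u i - ∑ i, α i * (u i - v i) := by
    rw [← Finset.sum_sub_distrib]
    simp only [mul_sub, sub_sub_cancel]
  calc |∑ i, α i * v i| ≤ |∑ i, α i * u i| + |∑ i, α i * (u i - v i)| := by
        rw [hsplit]
        exact abs_sub _ _
    _ ≤ |∑ i, α i * u i| + ∑ i, |α i| * η := by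
        gcongr
        refine (Finset.abs_sum_le_sum_abs _ _).trans (Finset.sum_le_sum fun i _ => ?_)
        rw [abs_mul]
        exact mul_le_mul_of_nonneg_left (h i) (abs_nonneg _)
    _ = |∑ i, α i * u i| + η * ∑ i, |α i| := by rw [← Finset.sum_mul, mul_comm]

lemma LipschitzWith.extend_real_of_subtype {α : Type*} [PseudoMetricSpace α] {s : Set α}
    {g : s → ℝ} {K : ℝ≥0} (hg : LipschitzWith K g) :
    ∃ G : α → ℝ, LipschitzWith K G ∧ ∀ p : s, G p = g p := by
  have hext : ∀ p : s, Function.extend Subtype.val g 0 p = g p :=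
    Subtype.val_injective.extend_apply g 0
  have hlip : LipschitzOnWith K (Function.extend Subtype.val g 0) s := by
    rw [lipschitzOnWith_iff_restrict]
    convert hg using 1
    exact funext hext
  obtain ⟨G, hG, hGg⟩ := hlip.extend_real
  exact ⟨G, hG, fun p => (hGg p.2).symm.trans (hext p)⟩

section Mollification

open MeasureTheory
open scoped Convolution ContDiff

variable {E : Type*} [NormedAddCommGroup E] [NormedSpace ℝ E] [FiniteDimensional ℝ E]
  {G : E → ℝ} {K : ℝ≥0} {ε : ℝ}

theorem LipschitzWith.exists_contDiff_lipschitzWith_dist_le (hG : LipschitzWith K G)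
    (hε : 0 < ε) :
    ∃ f : E → ℝ, ContDiff ℝ ∞ f ∧ LipschitzWith K f ∧ ∀ p, dist (f p) (G p) ≤ ε := by
  borelize E
  let μ : Measure E := Measure.addHaar
  obtain ⟨δ, hδ, hGδ⟩ := Metric.uniformContinuous_iff.1 hG.uniformContinuous ε hε
  let φ : ContDiffBump (0 : E) := ⟨δ / 2, δ, half_pos hδ, half_lt_self hδ⟩
  let f := φ.normed μ ⋆[ContinuousLinearMap.lsmul ℝ ℝ, μ] G
  have hGloc : LocallyIntegrable G μ := hG.continuous.locallyIntegrable
  have hφ : HasCompactSupport (φ.normed μ) := φ.hasCompactSupport_normed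
  refine ⟨f, hφ.contDiff_convolution_left _ φ.contDiff_normed hGloc,
    LipschitzWith.of_dist_le_mul fun p q => ?_, fun p => ?_⟩
  · have hconv := hφ.convolutionExists_left (ContinuousLinearMap.lsmul ℝ ℝ) φ.continuous_normed
      hGloc
    have hdiff : f p - f q = ∫ t, φ.normed μ t * (G (p - t) - G (q - t)) ∂μ := by
      simp only [f, convolution_def]
      rw [← integral_sub (hconv p) (hconv q)]
      simp only [mul_sub, ContinuousLinearMap.lsmul_apply, smul_eq_mul]
    have hpointwise : ∀ t, ‖φ.normed μ t * (G (p - t) - G (q - t))‖ ≤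
        φ.normed μ t * (K * dist p q) := by
      intro t
      rw [norm_mul, Real.norm_of_nonneg (φ.nonneg_normed t), ← dist_eq_norm]
      refine mul_le_mul_of_nonneg_left ?_ (φ.nonneg_normed t)
      simpa only [dist_sub_right] using hG.dist_le_mul (p - t) (q - t)
    calc dist (f p) (f q) = ‖∫ t, φ.normed μ t * (G (p - t) - G (q - t)) ∂μ‖ := by
          rw [dist_eq_norm, hdiff]
      _ ≤ ∫ t, φ.normed μ t * (K * dist p q) ∂μ :=
          norm_integral_le_of_norm_le (φ.integrable_normed.mul_const _) (.of_forall hpointwise)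
      _ = K * dist p q := by rw [integral_mul_const, φ.integral_normed, one_mul]
  · exact φ.dist_normed_convolution_le hG.continuous.aestronglyMeasurable
      fun y hy => (hGδ hy).le

theorem LipschitzWith.exists_contDiff_lipschitzWith_abs_sub_le_of_eq_zero
    (hG : LipschitzWith K G) {x₀ : E} (hG0 : G x₀ = 0) (hε : 0 < ε) :
    ∃ h : E → ℝ, ContDiff ℝ ∞ h ∧ LipschitzWith K h ∧ h x₀ = 0 ∧ ∀ p, |h p - G p| ≤ ε := by
  obtain ⟨f, hf, hfK, hfG⟩ := hG.exists_contDiff_lipschitzWith_dist_le (half_pos hε)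
  refine ⟨fun p => f p - f x₀, hf.sub contDiff_const,
    by simpa using hfK.sub (LipschitzWith.const (f x₀)), sub_self _, fun p => ?_⟩
  calc |f p - f x₀ - G p| = |(f p - G p) - (f x₀ - G x₀)| := by rw [hG0]; ring_nf
    _ ≤ |f p - G p| + |f x₀ - G x₀| := abs_sub _ _
    _ ≤ ε / 2 + ε / 2 := add_le_add (hfG p) (hfG x₀)
    _ = ε := add_halves ε

end Mollification

lemma EuclideanSpace.opNorm_le_sqrt_card {ι : Type*} [Fintype ι] [DecidableEq ι]
    (L : EuclideanSpace ℝ ι →L[ℝ] ℝ) (h : ∀ i, |L (EuclideanSpace.single i 1)| ≤ 1) :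
    ‖L‖ ≤ √(Fintype.card ι) := by
  refine L.opNorm_le_bound (Real.sqrt_nonneg _) fun v => ?_
  have hLv : L v = ∑ i, v i * L (EuclideanSpace.single i 1) := by
    simpa using congrArg L ((EuclideanSpace.basisFun ι ℝ).sum_repr v).symm
  have hcard : ∑ i, |L (EuclideanSpace.single i 1)| ^ 2 ≤ Fintype.card ι :=
    calc ∑ i, |L (EuclideanSpace.single i 1)| ^ 2 ≤ ∑ _i : ι, (1 : ℝ) :=
          Finset.sum_le_sum fun i _ => pow_le_one₀ (abs_nonneg _) (h i)
      _ = Fintype.card ι := by simp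
  calc ‖L v‖ ≤ ∑ i, |v i| * |L (EuclideanSpace.single i 1)| := by
        rw [hLv, Real.norm_eq_abs]
        exact (Finset.abs_sum_le_sum_abs _ _).trans_eq
          (Finset.sum_congr rfl fun i _ => abs_mul _ _)
    _ ≤ √(∑ i, |v i| ^ 2) * √(∑ i, |L (EuclideanSpace.single i 1)| ^ 2) :=
        Real.sum_mul_le_sqrt_mul_sqrt _ _ _
    _ ≤ ‖v‖ * √(Fintype.card ι) := by
        rw [EuclideanSpace.norm_eq]
        simp only [Real.norm_eq_abs]
        gcongr
    _ = √(Fintype.card ι) * ‖v‖ := mul_comm _ _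

section FreeSpace

variable {M : Type*} [MetricSpace M] {z : M} {ι : Type*} [Fintype ι]

lemma Lip0.norm_mk_le {f : M → ℝ} {K : ℝ≥0} (hf : LipschitzWith K f) (hz : f z = 0) :
    ‖(⟨f, ⟨K, hf⟩, hz⟩ : Lip0 z)‖ ≤ K :=
  NNReal.coe_le_coe.2 (Lip0.lipConst_le hf)

lemma Lip0.lipschitzWith (g : Lip0 z) : LipschitzWith (Lip0.lipConst g) g :=
  Lip0.lipschitzWith_lipConst g.lipschitz'

lemma sum_smul_diracF_apply (α : ι → ℝ) (x : ι → M) (g : Lip0 z) :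
    (∑ i, α i • diracF z (x i) : FreeSpace z).1 g = ∑ i, α i * g (x i) := by
  simp [diracF]

lemma abs_sum_mul_le_norm_sum_smul_diracF_mul (α : ι → ℝ) (x : ι → M) (g : Lip0 z) :
    |∑ i, α i * g (x i)| ≤ ‖∑ i, α i • diracF z (x i)‖ * ‖g‖ := by
  rw [← sum_smul_diracF_apply, ← Real.norm_eq_abs]
  exact ContinuousLinearMap.le_opNorm _ g

lemma norm_sum_smul_diracF_le {α : ι → ℝ} {x : ι → M} {C : ℝ} (hC : 0 ≤ C)
    (h : ∀ g : Lip0 z, |∑ i, α i * g (x i)| ≤ C * ‖g‖) :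
    ‖∑ i, α i • diracF z (x i)‖ ≤ C :=
  ContinuousLinearMap.opNorm_le_bound (∑ i, α i • diracF z (x i) : FreeSpace z).1 hC
    fun g => by
      rw [sum_smul_diracF_apply, Real.norm_eq_abs]
      exact h g

end FreeSpace

section Statement18

variable (n : ℕ)

/-- The unit cube `[0,1]ⁿ`. -/
def unitCube : Set (EuclideanSpace ℝ (Fin n)) := {p | ∀ i, p i ∈ Set.Icc (0 : ℝ) 1}

lemma zero_mem_unitCube : (0 : EuclideanSpace ℝ (Fin n)) ∈ unitCube n :=
  fun i => by simp [Set.mem_Icc]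

/-- The base point of `F([0,1]ⁿ)`. -/
noncomputable def cubeBase : unitCube n := ⟨0, zero_mem_unitCube n⟩

/-- The unit ball, for values and partial derivatives on the cube, of the space
`C¹([0,1]ⁿ)`, intersected with `{f : f(0) = 0}` (working with globally `C¹` functions). -/
def c1UnitBall : Set (EuclideanSpace ℝ (Fin n) → ℝ) :=
  {f | ContDiff ℝ 1 f ∧ f 0 = 0 ∧
    ∀ p ∈ unitCube n, |f p| ≤ 1 ∧ ∀ i, |fderiv ℝ f p (EuclideanSpace.single i 1)| ≤ 1}

lemma convex_unitCube : Convex ℝ (unitCube n) := fun _p hp _q hq _a _b ha hb hab i =>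
  convex_Icc (0 : ℝ) 1 (hp i) (hq i) ha hb hab

noncomputable def c1DualNorm {ι : Type*} [Fintype ι] (α : ι → ℝ) (x : ι → unitCube n) : ℝ :=
  sSup {r : ℝ | ∃ f ∈ c1UnitBall n, r = |∑ i, α i * f ((x i : EuclideanSpace ℝ (Fin n)))|}

section

variable {n}

lemma norm_le_sqrt_of_mem_unitCube {p : EuclideanSpace ℝ (Fin n)} (hp : p ∈ unitCube n) :
    ‖p‖ ≤ √n := by
  rw [EuclideanSpace.norm_eq]
  gcongr
  calc ∑ i, ‖p i‖ ^ 2 ≤ ∑ _i : Fin n, (1 : ℝ) := Finset.sum_le_sum fun i _ =>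
        pow_le_one₀ (norm_nonneg _) ((Real.norm_of_nonneg (hp i).1).trans_le (hp i).2)
    _ = n := by simp

lemma lipschitzOnWith_of_mem_c1UnitBall {f : EuclideanSpace ℝ (Fin n) → ℝ}
    (hf : f ∈ c1UnitBall n) : LipschitzOnWith (NNReal.sqrt n) f (unitCube n) := by
  refine (convex_unitCube n).lipschitzOnWith_of_nnnorm_fderiv_le
    (fun p _ => (hf.1.differentiable one_ne_zero).differentiableAt) fun p hp => ?_
  rw [← NNReal.coe_le_coe, coe_nnnorm, Real.coe_sqrt, NNReal.coe_natCast]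
  simpa using EuclideanSpace.opNorm_le_sqrt_card _ (hf.2.2 p hp).2

lemma exists_mem_c1UnitBall_mul_approx {G : EuclideanSpace ℝ (Fin n) → ℝ} {K : ℝ≥0}
    (hG : LipschitzWith K G) (hG0 : G 0 = 0) {ε : ℝ} (hε : 0 < ε) :
    ∃ f ∈ c1UnitBall n, ∀ p ∈ unitCube n, |(K * √n + ε) * f p - G p| ≤ ε := by
  obtain ⟨h, hh, hhK, hh0, hhG⟩ :=
    hG.exists_contDiff_lipschitzWith_abs_sub_le_of_eq_zero hG0 hε
  set c := K * √n + ε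
  have hc : 0 < c := by positivity
  have hlip : LipschitzWith (‖c⁻¹‖₊ * K) fun p => c⁻¹ * h p := Lip0.lip_const_smul hhK c⁻¹
  refine ⟨fun p => c⁻¹ * h p, ⟨?_, by simp [hh0], fun p hp => ⟨?_, fun i => ?_⟩⟩,
    fun p _ => by simpa only [mul_inv_cancel_left₀ hc.ne'] using hhG p⟩
  · exact (contDiff_const.mul hh).of_le (by simp)
  · have hGp : |G p| ≤ K * √n := by
      have := hG.dist_le_mul p 0
      rw [hG0, Real.dist_eq, sub_zero, dist_zero_right] at this
      exact this.trans (mul_le_mul_of_nonneg_left (norm_le_sqrt_of_mem_unitCube hp) K.2)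
    rw [abs_mul, abs_inv, abs_of_pos hc, inv_mul_le_one₀ hc]
    linarith [abs_sub_abs_le_abs_sub (h p) (G p), hhG p]
  · have hn : (1 : ℝ) ≤ √n := Real.one_le_sqrt.2 (by exact_mod_cast i.pos)
    calc |fderiv ℝ (fun p => c⁻¹ * h p) p (EuclideanSpace.single i 1)|
        ≤ ‖fderiv ℝ (fun p => c⁻¹ * h p) p‖ * ‖EuclideanSpace.single i (1 : ℝ)‖ :=
          Real.norm_eq_abs _ ▸ (fderiv ℝ _ p).le_opNorm _
      _ ≤ c⁻¹ * K := by simpa [abs_of_pos hc] using norm_fderiv_le_of_lipschitz ℝ hlip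
      _ ≤ 1 := by
          rw [inv_mul_le_one₀ hc]
          nlinarith [K.2]

variable {ι : Type*} [Fintype ι] (α : ι → ℝ) (x : ι → unitCube n)

lemma c1DualNorm_nonneg : 0 ≤ c1DualNorm n α x :=
  Real.sSup_nonneg (by rintro _ ⟨f, -, rfl⟩; exact abs_nonneg _)

lemma abs_sum_mul_le_c1DualNorm {f : EuclideanSpace ℝ (Fin n) → ℝ} (hf : f ∈ c1UnitBall n) :
    |∑ i, α i * f (x i)| ≤ c1DualNorm n α x := by
  refine le_csSup ⟨∑ i, |α i|, ?_⟩ ⟨f, hf, rfl⟩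
  rintro _ ⟨f, hf, rfl⟩
  refine (Finset.abs_sum_le_sum_abs _ _).trans (Finset.sum_le_sum fun i _ => ?_)
  rw [abs_mul]
  exact mul_le_of_le_one_right (abs_nonneg _) (hf.2.2 _ (x i).2).1

lemma c1DualNorm_le_sqrt_mul_norm :
    c1DualNorm n α x ≤ √n * ‖∑ i, α i • diracF (cubeBase n) (x i)‖ := by
  refine Real.sSup_le ?_ (by positivity)
  rintro _ ⟨f, hf, rfl⟩
  let g : Lip0 (cubeBase n) :=
    ⟨fun p => f p, ⟨_, (lipschitzOnWith_of_mem_c1UnitBall hf).to_restrict⟩, hf.2.1⟩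
  calc |∑ i, α i * f (x i)| = |∑ i, α i * g (x i)| := rfl
    _ ≤ ‖∑ i, α i • diracF (cubeBase n) (x i)‖ * ‖g‖ :=
        abs_sum_mul_le_norm_sum_smul_diracF_mul α x g
    _ ≤ ‖∑ i, α i • diracF (cubeBase n) (x i)‖ * √n := by
        gcongr
        exact (Lip0.norm_mk_le (z := cubeBase n)
          (lipschitzOnWith_of_mem_c1UnitBall hf).to_restrict hf.2.1).trans_eq
          (by rw [Real.coe_sqrt, NNReal.coe_natCast])
    _ = √n * ‖∑ i, α i • diracF (cubeBase n) (x i)‖ := mul_comm _ _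

lemma abs_sum_mul_le_sqrt_mul_c1DualNorm_mul (g : Lip0 (cubeBase n)) :
    |∑ i, α i * g (x i)| ≤ √n * c1DualNorm n α x * ‖g‖ := by
  set K := Lip0.lipConst g
  obtain ⟨G, hG, hGg⟩ := g.lipschitzWith.extend_real_of_subtype
  have hG0 : G 0 = 0 := (hGg (cubeBase n)).trans g.map_base
  refine le_of_forall_pos_le_add_mul (D := c1DualNorm n α x + ∑ i, |α i|) fun ε hε => ?_
  obtain ⟨f, hf, hfG⟩ := exists_mem_c1UnitBall_mul_approx hG hG0 hε
  calc |∑ i, α i * g (x i)|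
      ≤ |∑ i, α i * ((K * √n + ε) * f (x i))| + ε * ∑ i, |α i| :=
        abs_sum_mul_le_of_abs_sub_le α _ _ fun i => hGg (x i) ▸ hfG _ (x i).2
    _ = (K * √n + ε) * |∑ i, α i * f (x i)| + ε * ∑ i, |α i| := by
        simp_rw [mul_left_comm (α _), ← Finset.mul_sum, abs_mul]
        rw [abs_of_nonneg (by positivity)]
    _ ≤ (K * √n + ε) * c1DualNorm n α x + ε * ∑ i, |α i| := by
        gcongr
        exact abs_sum_mul_le_c1DualNorm α x hf
    _ = √n * c1DualNorm n α x * ‖g‖ + ε * (c1DualNorm n α x + ∑ i, |α i|) := by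
        rw [Lip0.norm_def]
        ring

lemma norm_le_sqrt_mul_c1DualNorm :
    ‖∑ i, α i • diracF (cubeBase n) (x i)‖ ≤ √n * c1DualNorm n α x :=
  norm_sum_smul_diracF_le (mul_nonneg (Real.sqrt_nonneg n) (c1DualNorm_nonneg α x))
    (abs_sum_mul_le_sqrt_mul_c1DualNorm_mul α x)

end

/-- on the span of the Diracs, the free-space norm of `μ = Σ αᵢ δ_{xᵢ}` is
equivalent, with constants `√n`, to `sup {|μ(f)| : ‖f‖¹_∞ ≤ 1, f(0) = 0}`; this yields a
linear isomorphic embedding of `F([0,1]ⁿ)` into `(C¹([0,1]ⁿ))^*` via `T(δ_x)(f) = f(x)`. -/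
theorem freeSpace_embeds_in_C1_dual (k : ℕ) (α : Fin k → ℝ) (x : Fin k → unitCube n) :
    (1 / Real.sqrt n) *
        sSup {r : ℝ | ∃ f ∈ c1UnitBall n,
          r = |∑ i, α i * f ((x i : EuclideanSpace ℝ (Fin n)))|} ≤
      ‖∑ i, α i • diracF (cubeBase n) (x i)‖ ∧
    ‖∑ i, α i • diracF (cubeBase n) (x i)‖ ≤
      Real.sqrt n *
        sSup {r : ℝ | ∃ f ∈ c1UnitBall n,
          r = |∑ i, α i * f ((x i : EuclideanSpace ℝ (Fin n)))|} := by
  refine ⟨?_, norm_le_sqrt_mul_c1DualNorm α x⟩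
  calc 1 / √n * c1DualNorm n α x
      ≤ 1 / √n * (√n * ‖∑ i, α i • diracF (cubeBase n) (x i)‖) := by
        gcongr
        exact c1DualNorm_le_sqrt_mul_norm α x
    _ ≤ ‖∑ i, α i • diracF (cubeBase n) (x i)‖ := by
        rw [one_div, ← mul_assoc]
        exact mul_le_of_le_one_left (by positivity) inv_mul_le_one

end Statement18
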